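/- Let Σ be a K × K symmetric positive definite real matrix, s ≥ 1 an integer, and Ψ a symmetric K × K matrix. Define κ_∞ = min over index sets J with |J| ≤ s and vectors Δ ∈ ℝ^K with ‖Δ_{Jᶜ}‖₁ ≤ ‖Δ_J‖₁ and |Δ|_∞ = 1 of |ΨΔ|_∞. If |Ψ - Σ|_∞ ≤ ε entrywise, then κ_∞ ≥ ‖Σ^{-1}‖_∞^{-1} - 2 s ε, where ‖Σ^{-1}‖_∞ denotes the operator norm of Σ^{-1} from (ℝ^K, |·|_∞) to itself. -/
import Mathlib


theorem stmt_12 (K : ℕ) (hK : 0 < K) (Sig Ψ : Matrix (Fin K) (Fin K) ℝ)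
    (hSigsym : Sig.IsSymm) (hSigpd : Sig.PosDef) (hPsisym : Ψ.IsSymm)
    (s : ℕ) (hs : 1 ≤ s) (ε : ℝ) (hε : 0 ≤ ε)
    (hclose : ∀ i j, |Ψ i j - Sig i j| ≤ ε)
    (hne : (Finset.univ : Finset (Fin K)).Nonempty)
    (J : Finset (Fin K)) (hJ : J.card ≤ s) (Δ : Fin K → ℝ)
    (hcone : ∑ k ∈ Jᶜ, |Δ k| ≤ ∑ k ∈ J, |Δ k|)
    (hΔle : ∀ k, |Δ k| ≤ 1) (hΔeq : ∃ k, |Δ k| = 1) :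
    (Finset.univ.sup' hne fun i => ∑ j, |Sig⁻¹ i j|)⁻¹ - 2 * s * ε ≤
      Finset.univ.sup' hne fun i => |Ψ.mulVec Δ i| := by
  set M := Finset.univ.sup' hne fun i => ∑ j, |Sig⁻¹ i j| with hMdef
  -- ℓ¹ bound on Δ
  have hΔ1 : ∑ k, |Δ k| ≤ 2 * s := by
    have h1 : ∑ k ∈ J, |Δ k| ≤ (s : ℝ) := by
      calc ∑ k ∈ J, |Δ k| ≤ ∑ _k ∈ J, (1 : ℝ) :=
            Finset.sum_le_sum fun k _ => hΔle k
        _ = J.card := by simp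
        _ ≤ s := by exact_mod_cast hJ
    calc ∑ k, |Δ k| = ∑ k ∈ J, |Δ k| + ∑ k ∈ Jᶜ, |Δ k| :=
          (Finset.sum_add_sum_compl J _).symm
      _ ≤ 2 * s := by linarith
  obtain ⟨k0, hk0⟩ := hΔeq
  have hinv : Sig⁻¹ * Sig = 1 :=
    Sig.nonsing_inv_mul (isUnit_iff_ne_zero.2 hSigpd.det_pos.ne')
  set S := Finset.univ.sup' hne fun i => |Sig.mulVec Δ i| with hSdef
  have hS0 : 0 ≤ S := le_trans (abs_nonneg _) (Finset.le_sup' (fun i => |Sig.mulVec Δ i|) (Finset.mem_univ k0))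
  have hΔi : ∀ i, Δ i = ∑ j, Sig⁻¹ i j * Sig.mulVec Δ j := by
    intro i
    have h := congrArg (fun A => Matrix.mulVec A Δ i) hinv
    simp only [Matrix.one_mulVec, ← Matrix.mulVec_mulVec] at h
    rw [← h]
    simp [Matrix.mulVec, dotProduct]
  have hkey : 1 ≤ M * S := by
    calc (1 : ℝ) = |Δ k0| := hk0.symm
      _ = |∑ j, Sig⁻¹ k0 j * Sig.mulVec Δ j| := by rw [hΔi k0]
      _ ≤ ∑ j, |Sig⁻¹ k0 j * Sig.mulVec Δ j| := Finset.abs_sum_le_sum_abs _ _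
      _ ≤ ∑ j, |Sig⁻¹ k0 j| * S := by
          apply Finset.sum_le_sum
          intro j _
          rw [abs_mul]
          exact mul_le_mul_of_nonneg_left
            (Finset.le_sup' (fun i => |Sig.mulVec Δ i|) (Finset.mem_univ j))
            (abs_nonneg _)
      _ = (∑ j, |Sig⁻¹ k0 j|) * S := by rw [Finset.sum_mul]
      _ ≤ M * S := mul_le_mul_of_nonneg_right
            (Finset.le_sup' (fun i => ∑ j, |Sig⁻¹ i j|) (Finset.mem_univ k0)) hS0
  have hM0 : 0 < M := by
    by_contra h
    push_neg at h
    nlinarith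
  have hMS : M⁻¹ ≤ S := by
    rw [inv_le_iff_one_le_mul₀ hM0] at *
    linarith [hkey]
  -- attain S at some index
  obtain ⟨i0, -, hi0⟩ := Finset.exists_mem_eq_sup' hne fun i => |Sig.mulVec Δ i|
  have hpert : |Ψ.mulVec Δ i0 - Sig.mulVec Δ i0| ≤ 2 * s * ε := by
    have : Ψ.mulVec Δ i0 - Sig.mulVec Δ i0 = ∑ j, (Ψ i0 j - Sig i0 j) * Δ j := by
      simp [Matrix.mulVec, dotProduct, ← Finset.sum_sub_distrib, sub_mul]
    rw [this]
    calc |∑ j, (Ψ i0 j - Sig i0 j) * Δ j| ≤ ∑ j, |(Ψ i0 j - Sig i0 j) * Δ j| :=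
          Finset.abs_sum_le_sum_abs _ _
      _ ≤ ∑ j, ε * |Δ j| := by
          apply Finset.sum_le_sum
          intro j _
          rw [abs_mul]
          exact mul_le_mul_of_nonneg_right (hclose i0 j) (abs_nonneg _)
      _ = ε * ∑ j, |Δ j| := by rw [Finset.mul_sum]
      _ ≤ ε * (2 * s) := mul_le_mul_of_nonneg_left hΔ1 hε
      _ = 2 * s * ε := by ring
  have hlow : S - 2 * s * ε ≤ |Ψ.mulVec Δ i0| := by
    have h1 : |Sig.mulVec Δ i0| - |Ψ.mulVec Δ i0| ≤ 2 * s * ε := by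
      have := abs_sub_abs_le_abs_sub (Sig.mulVec Δ i0) (Ψ.mulVec Δ i0)
      rw [abs_sub_comm] at this
      linarith
    linarith [hi0 ▸ h1]
  calc M⁻¹ - 2 * s * ε ≤ S - 2 * s * ε := by linarith
    _ ≤ |Ψ.mulVec Δ i0| := hlow
    _ ≤ _ := Finset.le_sup' (fun i => |Ψ.mulVec Δ i|) (Finset.mem_univ i0)
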